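/- arXiv:2102.03282 — 3 statements merged into one kernel-verified Lean document; each statement's English description precedes it below -/
import Mathlib

section
/- Let m ≥ 1, k ≥ 0, let G₀, G₁, …, G_k be nonempty bounded subsets of ℝ^m, and let γ ≥ 0 satisfy G_{j+1} ⊆ (1+γ)·conv(G_j) + (−γ)·conv(G_j) for every 0 ≤ j < k (Minkowski sum). Suppose moreover that γ' ≥ 0 satisfies G_k ⊆ (1+γ')·conv(G₀) + (−γ')·conv(G₀). Then R̂(G_k) ≤ min{(1+2γ)^k, 1+2γ'}·R̂(G₀). (Abstract form of Theorem 2: a circuit class using at most k copies of a resource channel of free robustness γ has empirical Rademacher complexity at most min{(1+2γ)^k, 1+2γ_max} times that of the free class.) -/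
open Finset
open scoped Pointwise

/-- The empirical Rademacher complexity of a set `A ⊆ ℝ^m`. -/
noncomputable def radComp (m : ℕ) (A : Set (Fin m → ℝ)) : ℝ :=
  ((2 : ℝ) ^ m)⁻¹ * ∑ ε : Fin m → Bool,
    sSup ((fun v => (1 / (m : ℝ)) * ∑ i, (if ε i then (1 : ℝ) else -1) * v i) '' A)

/-- The linear functional appearing in the Rademacher complexity. -/
noncomputable def Lfun (m : ℕ) (ε : Fin m → Bool) (v : Fin m → ℝ) : ℝ :=
  (1 / (m : ℝ)) * ∑ i, (if ε i then (1 : ℝ) else -1) * v i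

lemma radComp_eq (m : ℕ) (A : Set (Fin m → ℝ)) :
    radComp m A = ((2 : ℝ) ^ m)⁻¹ * ∑ ε : Fin m → Bool, sSup (Lfun m ε '' A) := rfl

lemma Lfun_linear (m : ℕ) (ε : Fin m → Bool) : IsLinearMap ℝ (Lfun m ε) := by
  constructor
  · intro x y
    simp only [Lfun, Pi.add_apply]
    rw [← mul_add, ← Finset.sum_add_distrib]
    congr 1
    exact Finset.sum_congr rfl fun i _ => by ring
  · intro c x
    simp only [Lfun, Pi.smul_apply, smul_eq_mul]
    have h : (∑ i, (if ε i then (1:ℝ) else -1) * (c * x i))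
        = c * ∑ i, (if ε i then (1:ℝ) else -1) * x i := by
      rw [Finset.mul_sum]
      exact Finset.sum_congr rfl fun i _ => by ring
    rw [h]
    ring

lemma Lfun_not (m : ℕ) (ε : Fin m → Bool) (v : Fin m → ℝ) :
    Lfun m (fun i => !(ε i)) v = -Lfun m ε v := by
  have h : (∑ i, (if !(ε i) then (1:ℝ) else -1) * v i)
      = -∑ i, (if ε i then (1:ℝ) else -1) * v i := by
    rw [← Finset.sum_neg_distrib]
    exact Finset.sum_congr rfl fun i _ => by cases h : ε i <;> simp
  simp only [Lfun, h]
  ring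

lemma bddAbove_Lfun_image {m : ℕ} (ε : Fin m → Bool) {A : Set (Fin m → ℝ)}
    (hA : Bornology.IsBounded A) : BddAbove (Lfun m ε '' A) := by
  obtain ⟨C, hC⟩ := isBounded_iff_forall_norm_le.mp hA
  refine ⟨(1 / (m : ℝ)) * (m * C), ?_⟩
  rintro y ⟨v, hv, rfl⟩
  have h1 : ∀ i, (if ε i then (1:ℝ) else -1) * v i ≤ C := by
    intro i
    have hvi : |v i| ≤ C := le_trans (by
      simpa using norm_le_pi_norm v i) (hC v hv)
    have hle : (if ε i then (1:ℝ) else -1) * v i ≤ |v i| := by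
      cases h : ε i
      · simpa using neg_le_abs (v i)
      · simpa using le_abs_self (v i)
    exact hle.trans hvi
  have h2 : ∑ i, (if ε i then (1:ℝ) else -1) * v i ≤ ∑ _i : Fin m, C :=
    Finset.sum_le_sum fun i _ => h1 i
  simp only [Finset.sum_const, Finset.card_univ, Fintype.card_fin, nsmul_eq_mul] at h2
  have : (0:ℝ) ≤ 1 / (m : ℝ) := by positivity
  exact mul_le_mul_of_nonneg_left h2 this

lemma Lfun_convexHull_le {m : ℕ} (ε : Fin m → Bool) {A : Set (Fin m → ℝ)}
    (hne : A.Nonempty) (hbd : BddAbove (Lfun m ε '' A)) {x : Fin m → ℝ}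
    (hx : x ∈ convexHull ℝ A) : Lfun m ε x ≤ sSup (Lfun m ε '' A) := by
  have hconv : Convex ℝ {y : Fin m → ℝ | Lfun m ε y ≤ sSup (Lfun m ε '' A)} :=
    convex_halfSpace_le (Lfun_linear m ε) _
  exact convexHull_min (fun a ha => le_csSup hbd ⟨a, ha, rfl⟩) hconv hx

lemma not_involutive (m : ℕ) :
    Function.Involutive (fun ε : Fin m → Bool => fun i => !(ε i)) := by
  intro ε; funext i; simp

lemma radComp_nonneg {m : ℕ} {A : Set (Fin m → ℝ)} (hne : A.Nonempty)
    (hA : Bornology.IsBounded A) : 0 ≤ radComp m A := by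
  obtain ⟨v, hv⟩ := hne
  rw [radComp_eq]
  apply mul_nonneg (by positivity)
  have h1 : ∀ ε : Fin m → Bool, Lfun m ε v ≤ sSup (Lfun m ε '' A) :=
    fun ε => le_csSup (bddAbove_Lfun_image ε hA) ⟨v, hv, rfl⟩
  have h2 : ∑ ε : Fin m → Bool, Lfun m ε v = 0 := by
    have hbij := (not_involutive m).bijective
    have h3 : ∑ ε : Fin m → Bool, Lfun m ε v
        = ∑ ε : Fin m → Bool, -(Lfun m ε v) := by
      refine Fintype.sum_bijective _ hbij _ _ fun ε => ?_
      rw [Lfun_not m ε v]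
      ring
    simp only [Finset.sum_neg_distrib] at h3
    linarith
  calc (0:ℝ) = ∑ ε : Fin m → Bool, Lfun m ε v := h2.symm
    _ ≤ ∑ ε : Fin m → Bool, sSup (Lfun m ε '' A) :=
      Finset.sum_le_sum fun ε _ => h1 ε

lemma radComp_step {m : ℕ} {A B : Set (Fin m → ℝ)} (hAne : A.Nonempty)
    (hAbd : Bornology.IsBounded A) (hBne : B.Nonempty) {t : ℝ} (ht : 0 ≤ t)
    (hsub : B ⊆ (1 + t) • convexHull ℝ A + (-t) • convexHull ℝ A) :
    radComp m B ≤ (1 + 2 * t) * radComp m A := by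
  have hbdd : ∀ ε : Fin m → Bool, BddAbove (Lfun m ε '' A) :=
    fun ε => bddAbove_Lfun_image ε hAbd
  set S : (Fin m → Bool) → ℝ := fun ε => sSup (Lfun m ε '' A) with hS
  have key : ∀ ε : Fin m → Bool,
      sSup (Lfun m ε '' B) ≤ (1 + t) * S ε + t * S (fun i => !(ε i)) := by
    intro ε
    apply csSup_le (hBne.image _)
    rintro y ⟨b, hb, rfl⟩
    obtain ⟨x, hx, z, hz, hxz⟩ := hsub hb
    obtain ⟨a₁, ha₁, rfl⟩ := hx
    obtain ⟨a₂, ha₂, rfl⟩ := hz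
    have hlin := Lfun_linear m ε
    have hb' : Lfun m ε b = (1 + t) * Lfun m ε a₁ + (-t) * Lfun m ε a₂ := by
      rw [← hxz, hlin.map_add, hlin.map_smul, hlin.map_smul]
      simp [smul_eq_mul]
    have h1 : Lfun m ε a₁ ≤ S ε := Lfun_convexHull_le ε hAne (hbdd ε) ha₁
    have h2 : Lfun m (fun i => !(ε i)) a₂ ≤ S (fun i => !(ε i)) :=
      Lfun_convexHull_le _ hAne (hbdd _) ha₂
    have h2' : -Lfun m ε a₂ ≤ S (fun i => !(ε i)) := by
      rw [← Lfun_not m ε a₂]; exact h2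
    have h1' : (1 + t) * Lfun m ε a₁ ≤ (1 + t) * S ε :=
      mul_le_mul_of_nonneg_left h1 (by linarith)
    have h2'' : (-t) * Lfun m ε a₂ ≤ t * S (fun i => !(ε i)) := by
      have := mul_le_mul_of_nonneg_left h2' ht
      linarith [this]
    rw [hb']
    linarith
  have hsum : ∑ ε : Fin m → Bool, sSup (Lfun m ε '' B)
      ≤ ∑ ε : Fin m → Bool, ((1 + t) * S ε + t * S (fun i => !(ε i))) :=
    Finset.sum_le_sum fun ε _ => key ε
  have hre : ∑ ε : Fin m → Bool, S (fun i => !(ε i)) = ∑ ε : Fin m → Bool, S ε :=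
    Fintype.sum_bijective _ (not_involutive m).bijective _ _ fun ε => rfl
  have hsum2 : ∑ ε : Fin m → Bool, ((1 + t) * S ε + t * S (fun i => !(ε i)))
      = (1 + 2 * t) * ∑ ε : Fin m → Bool, S ε := by
    rw [Finset.sum_add_distrib, ← Finset.mul_sum, ← Finset.mul_sum, hre]
    ring
  rw [radComp_eq, radComp_eq]
  have hpos : (0:ℝ) ≤ ((2:ℝ) ^ m)⁻¹ := by positivity
  calc ((2:ℝ) ^ m)⁻¹ * ∑ ε : Fin m → Bool, sSup (Lfun m ε '' B)
      ≤ ((2:ℝ) ^ m)⁻¹ * ((1 + 2 * t) * ∑ ε : Fin m → Bool, S ε) := by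
        apply mul_le_mul_of_nonneg_left _ hpos
        rw [← hsum2]; exact hsum
    _ = (1 + 2 * t) * (((2:ℝ) ^ m)⁻¹ * ∑ ε : Fin m → Bool, S ε) := by ring

theorem stmt5 (m : ℕ) (hm : 1 ≤ m) (k : ℕ) (G : ℕ → Set (Fin m → ℝ))
    (hne : ∀ j ≤ k, (G j).Nonempty) (hbd : ∀ j ≤ k, Bornology.IsBounded (G j))
    (γ : ℝ) (hγ : 0 ≤ γ)
    (hstep : ∀ j < k,
      G (j + 1) ⊆ (1 + γ) • convexHull ℝ (G j) + (-γ) • convexHull ℝ (G j))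
    (γ' : ℝ) (hγ' : 0 ≤ γ')
    (hmax : G k ⊆ (1 + γ') • convexHull ℝ (G 0) + (-γ') • convexHull ℝ (G 0)) :
    radComp m (G k) ≤ min ((1 + 2 * γ) ^ k) (1 + 2 * γ') * radComp m (G 0) := by
  have h0ne : (G 0).Nonempty := hne 0 (Nat.zero_le k)
  have h0bd : Bornology.IsBounded (G 0) := hbd 0 (Nat.zero_le k)
  have hR0 : 0 ≤ radComp m (G 0) := radComp_nonneg h0ne h0bd
  have h2 : radComp m (G k) ≤ (1 + 2 * γ') * radComp m (G 0) :=
    radComp_step h0ne h0bd (hne k le_rfl) hγ' hmax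
  have h1 : ∀ j ≤ k, radComp m (G j) ≤ (1 + 2 * γ) ^ j * radComp m (G 0) := by
    intro j
    induction j with
    | zero => intro _; simp
    | succ n ih =>
      intro hjk
      have hn : n ≤ k := Nat.le_of_succ_le hjk
      have hstep' : radComp m (G (n + 1)) ≤ (1 + 2 * γ) * radComp m (G n) :=
        radComp_step (hne n hn) (hbd n hn) (hne (n + 1) hjk) hγ
          (hstep n (Nat.lt_of_succ_le hjk))
      calc radComp m (G (n + 1)) ≤ (1 + 2 * γ) * radComp m (G n) := hstep'
        _ ≤ (1 + 2 * γ) * ((1 + 2 * γ) ^ n * radComp m (G 0)) :=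
          mul_le_mul_of_nonneg_left (ih hn) (by linarith)
        _ = (1 + 2 * γ) ^ (n + 1) * radComp m (G 0) := by ring
  have h1k := h1 k le_rfl
  rcases le_total ((1 + 2 * γ) ^ k) (1 + 2 * γ') with h | h
  · rw [min_eq_left h]; exact h1k
  · rw [min_eq_right h]; exact h2
end

section
/- Let Z be a measurable space, D a probability measure on Z, m ≥ 1, a < b real numbers, and 𝒢 a nonempty countable class of measurable functions Z → [a, b]. For every t > 0, the probability over S = (z₁,…,z_m) drawn i.i.d. from D that |R_D(𝒢) − R̂_S(𝒢)| ≥ t is at most 2·exp(−2mt²/(b−a)²). -/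
open Finset MeasureTheory

/-- Empirical Rademacher complexity of a function class `G` on the sample `S`. -/
noncomputable def empRad {Z : Type*} (m : ℕ) (S : Fin m → Z) (G : Set (Z → ℝ)) : ℝ :=
  radComp m ((fun g => fun i => g (S i)) '' G)

/-- Expected Rademacher complexity `R_D(G) = E_{S ∼ D^m}[R̂_S(G)]`. -/
noncomputable def expRad {Z : Type*} [MeasurableSpace Z] (m : ℕ) (D : Measure Z)
    (G : Set (Z → ℝ)) : ℝ :=
  ∫ S, empRad m S G ∂(Measure.pi fun _ : Fin m => D)

/-! Replacing one sample point changes the empirical Rademacher complexity by at most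
`(b - a) / m`: it is an average of `2 ^ m` suprema, and replacing `zᵢ` moves every term of each
supremum by at most `(b - a) / m`. McDiarmid's bounded-differences inequality then gives the
two-sided Gaussian tail.

McDiarmid's inequality is proved by induction on the number of coordinates. With the other
coordinates fixed, `f` minus its average over the first coordinate is a centred variable of
range at most `c`, hence sub-Gaussian with parameter `(c / 2) ^ 2` by Hoeffding's lemma;
averaging out the first coordinate leaves a function of the remaining ones with the same
bounded differences, and the sub-Gaussian parameters add up to `n (c / 2) ^ 2`. -/

open ProbabilityTheory Real
open scoped NNReal

lemma ProbabilityTheory.HasSubgaussianMGF.measure_abs_ge_le {Ω : Type*} [MeasurableSpace Ω]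
    {μ : Measure Ω} [IsFiniteMeasure μ] {X : Ω → ℝ} {c : ℝ≥0} (h : HasSubgaussianMGF X c μ)
    {ε : ℝ} (hε : 0 ≤ ε) :
    μ {ω | ε ≤ |X ω|} ≤ ENNReal.ofReal (2 * exp (-ε ^ 2 / (2 * c))) := by
  have h_tail : ∀ {Y : Ω → ℝ}, HasSubgaussianMGF Y c μ →
      μ {ω | ε ≤ Y ω} ≤ ENNReal.ofReal (exp (-ε ^ 2 / (2 * c))) := fun hY ↦ by
    rw [← ofReal_measureReal]
    exact ENNReal.ofReal_le_ofReal (hY.measure_ge_le hε)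
  calc μ {ω | ε ≤ |X ω|} ≤ μ ({ω | ε ≤ X ω} ∪ {ω | ε ≤ (-X) ω}) :=
        measure_mono fun ω hω ↦ show ε ≤ X ω ∨ ε ≤ -X ω from le_abs.1 hω
    _ ≤ μ {ω | ε ≤ X ω} + μ {ω | ε ≤ (-X) ω} := measure_union_le _ _
    _ ≤ ENNReal.ofReal (exp (-ε ^ 2 / (2 * c))) + ENNReal.ofReal (exp (-ε ^ 2 / (2 * c))) :=
        add_le_add (h_tail h) (h_tail h.neg)
    _ = ENNReal.ofReal (2 * exp (-ε ^ 2 / (2 * c))) := by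
        rw [← ENNReal.ofReal_add (exp_nonneg _) (exp_nonneg _)]
        ring_nf

section Hoeffding

variable {Ω : Type*} [MeasurableSpace Ω] {μ : Measure Ω} [IsProbabilityMeasure μ] {X : Ω → ℝ}

lemma hasSubgaussianMGF_sub_integral_of_sub_le {c : ℝ≥0} (hX : Measurable X)
    (hc : ∀ ω ω', X ω - X ω' ≤ c) :
    HasSubgaussianMGF (fun ω ↦ X ω - μ[X]) ((c / 2) ^ 2) μ := by
  have : Nonempty Ω := nonempty_of_isProbabilityMeasure μ
  have hbdd : BddBelow (Set.range X) := by
    obtain ⟨ω₀⟩ := this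
    exact ⟨X ω₀ - c, by rintro _ ⟨ω, rfl⟩; linarith [hc ω₀ ω]⟩
  have hX_mem : ∀ ω, X ω ∈ Set.Icc (⨅ ω, X ω) ((⨅ ω, X ω) + c) := fun ω ↦
    ⟨ciInf_le hbdd ω, by linarith [le_ciInf fun ω' ↦ (by linarith [hc ω ω'] : X ω - c ≤ X ω')]⟩
  simpa using hasSubgaussianMGF_of_mem_Icc hX.aemeasurable (ae_of_all μ hX_mem)

end Hoeffding

section Product

variable {Ω₁ Ω₂ : Type*} [MeasurableSpace Ω₁] [MeasurableSpace Ω₂]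
  {μ₁ : Measure Ω₁} {μ₂ : Measure Ω₂} [IsProbabilityMeasure μ₁] [IsProbabilityMeasure μ₂]

lemma hasSubgaussianMGF_prod_of_sub_le {F : Ω₁ × Ω₂ → ℝ} {M : ℝ} {c K : ℝ≥0}
    (hF : Measurable F) (hM : ∀ p, |F p| ≤ M) (hc : ∀ x x' y, F (x, y) - F (x', y) ≤ c)
    (hK : HasSubgaussianMGF (fun y ↦ ∫ x, F (x, y) ∂μ₁ - ∫ y', ∫ x, F (x, y') ∂μ₁ ∂μ₂) K μ₂) :
    HasSubgaussianMGF (fun p ↦ F p - ∫ p', F p' ∂(μ₁.prod μ₂)) (K + (c / 2) ^ 2)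
      (μ₁.prod μ₂) := by
  set g : Ω₂ → ℝ := fun y ↦ ∫ x, F (x, y) ∂μ₁
  have hF_mem : ∀ p, F p ∈ Set.Icc (-M) M := fun p ↦ abs_le.1 (hM p)
  have hF_int : Integrable F (μ₁.prod μ₂) := .of_mem_Icc _ _ hF.aemeasurable (ae_of_all _ hF_mem)
  rw [integral_prod_symm F hF_int]
  set E := ∫ y, g y ∂μ₂
  have h_int : ∀ t, Integrable (fun p ↦ exp (t * (F p - E))) (μ₁.prod μ₂) := fun t ↦
    integrable_exp_mul_of_mem_Icc (a := -M - E) (b := M - E) (hF.sub_const E).aemeasurable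
      (ae_of_all _ fun p ↦ ⟨by linarith [(hF_mem p).1], by linarith [(hF_mem p).2]⟩)
  have h_sect : ∀ y, HasSubgaussianMGF (fun x ↦ F (x, y) - g y) ((c / 2) ^ 2) μ₁ := fun y ↦
    hasSubgaussianMGF_sub_integral_of_sub_le (hF.comp measurable_prodMk_right) (hc · · y)
  refine ⟨h_int, fun t ↦ ?_⟩
  calc mgf (fun p ↦ F p - E) (μ₁.prod μ₂) t
      = ∫ y, exp (t * (g y - E)) * mgf (fun x ↦ F (x, y) - g y) μ₁ t ∂μ₂ := by
        rw [mgf, integral_prod_symm _ (h_int t)]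
        congr with y
        rw [mgf, ← integral_const_mul]
        congr with x
        rw [← exp_add]
        ring_nf
    _ ≤ ∫ y, exp (t * (g y - E)) * exp (((c / 2) ^ 2 : ℝ≥0) * t ^ 2 / 2) ∂μ₂ := by
        refine integral_mono_of_nonneg (ae_of_all _ fun y ↦ ?_)
          ((hK.integrable_exp_mul t).mul_const _) (ae_of_all _ fun y ↦ ?_)
        · exact mul_nonneg (exp_nonneg _) mgf_nonneg
        · exact mul_le_mul_of_nonneg_left ((h_sect y).mgf_le t) (exp_nonneg _)
    _ = mgf (fun y ↦ g y - E) μ₂ t * exp (((c / 2) ^ 2 : ℝ≥0) * t ^ 2 / 2) :=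
        integral_mul_const _ _
    _ ≤ exp (K * t ^ 2 / 2) * exp (((c / 2) ^ 2 : ℝ≥0) * t ^ 2 / 2) := by
        gcongr
        exact hK.mgf_le t
    _ = exp (((K + (c / 2) ^ 2 : ℝ≥0) : ℝ) * t ^ 2 / 2) := by
        rw [← exp_add, NNReal.coe_add]; ring_nf

end Product

lemma sub_le_card_mul_of_update_sub_le {ι α : Type*} [Fintype ι] [DecidableEq ι]
    {f : (ι → α) → ℝ} {c : ℝ} (hc : ∀ S i z, f (Function.update S i z) - f S ≤ c)
    (S S' : ι → α) : f S' - f S ≤ Fintype.card ι * c := by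
  suffices h : ∀ s : Finset ι, f (s.piecewise S' S) - f S ≤ #s * c by
    simpa using h univ
  intro s
  induction s using Finset.induction_on with
  | empty => simp
  | insert j s hj ih =>
    rw [Finset.piecewise_insert, card_insert_of_notMem hj]
    push_cast
    linarith [hc (s.piecewise S' S) j (S' j)]

section McDiarmid

variable {Z : Type*} [MeasurableSpace Z] {D : Measure Z} [IsProbabilityMeasure D]

lemma MeasurableEquiv.piFinSuccAbove_zero_symm_apply {n : ℕ} (x : Z) (y : Fin n → Z) :
    (MeasurableEquiv.piFinSuccAbove (fun _ : Fin (n + 1) ↦ Z) 0).symm (x, y) = Fin.cons x y := by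
  simp [MeasurableEquiv.piFinSuccAbove_symm_apply, Fin.insertNthEquiv, Fin.insertNth_zero']

lemma hasSubgaussianMGF_of_update_sub_le_of_bounded {c : ℝ≥0} {M : ℝ} :
    ∀ {n : ℕ} {f : (Fin n → Z) → ℝ}, Measurable f → (∀ S, |f S| ≤ M) →
      (∀ S i z, f (Function.update S i z) - f S ≤ c) →
      HasSubgaussianMGF (fun S ↦ f S - ∫ S', f S' ∂(Measure.pi fun _ ↦ D))
        (n * (c / 2) ^ 2) (Measure.pi fun _ ↦ D)
  | 0, f, _, _, _ => by
    have hf : ∀ S, f S - ∫ S', f S' ∂(Measure.pi fun _ ↦ D) = 0 := fun S ↦ by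
      rw [show f = fun _ ↦ f S from funext fun S' ↦ congrArg f (Subsingleton.elim _ _)]
      simp
    simp [hf]
  | n + 1, f, hf, hM, hc => by
    set e := MeasurableEquiv.piFinSuccAbove (fun _ : Fin (n + 1) ↦ Z) 0
    have he : MeasurePreserving e (Measure.pi fun _ ↦ D) (D.prod (Measure.pi fun _ ↦ D)) :=
      measurePreserving_piFinSuccAbove (fun _ ↦ D) 0
    set F : Z × (Fin n → Z) → ℝ := fun p ↦ f (e.symm p)
    have hF_cons : ∀ x y, F (x, y) = f (Fin.cons x y) := fun x y ↦
      congrArg f (MeasurableEquiv.piFinSuccAbove_zero_symm_apply x y)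
    have hF : Measurable F := hf.comp e.symm.measurable
    have hF_int : ∀ y, Integrable (fun x ↦ F (x, y)) D := fun y ↦
      .of_mem_Icc (-M) M (hF.comp measurable_prodMk_right).aemeasurable
        (ae_of_all _ fun x ↦ abs_le.1 (hM _))
    have hg : HasSubgaussianMGF
        (fun y ↦ ∫ x, F (x, y) ∂D - ∫ y', ∫ x, F (x, y') ∂D ∂(Measure.pi fun _ ↦ D))
        (n * (c / 2) ^ 2) (Measure.pi fun _ ↦ D) := by
      refine hasSubgaussianMGF_of_update_sub_le_of_bounded (M := M)
        (hF.stronglyMeasurable.integral_prod_left'.measurable) (fun y ↦ ?_) (fun y i z ↦ ?_)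
      · simpa using norm_integral_le_of_norm_le_const (μ := D) (f := fun x ↦ F (x, y))
          (ae_of_all _ fun x ↦ hM _)
      · rw [← integral_sub (hF_int _) (hF_int _)]
        refine (integral_mono ((hF_int _).sub (hF_int _)) (integrable_const (c : ℝ))
          fun x ↦ ?_).trans_eq (by simp)
        simpa only [Pi.sub_apply, hF_cons, Fin.cons_update] using hc (Fin.cons x y) i.succ z
    have hF_sub : ∀ x x' y, F (x, y) - F (x', y) ≤ c := fun x x' y ↦ by
      simpa only [hF_cons, Fin.update_cons_zero] using hc (Fin.cons x' y) 0 x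
    have h := hasSubgaussianMGF_prod_of_sub_le hF (fun p ↦ hM _) hF_sub hg
    rw [← he.map_eq] at h
    convert h.of_map e.measurable.aemeasurable using 1
    · ext S
      simp only [Function.comp_apply, F, integral_map_equiv, e.symm_apply_apply]
    · push_cast
      ring

lemma hasSubgaussianMGF_of_update_sub_le {n : ℕ} {f : (Fin n → Z) → ℝ} {c : ℝ≥0}
    (hf : Measurable f) (hc : ∀ S i z, f (Function.update S i z) - f S ≤ c) :
    HasSubgaussianMGF (fun S ↦ f S - ∫ S', f S' ∂(Measure.pi fun _ ↦ D))
      (n * (c / 2) ^ 2) (Measure.pi fun _ ↦ D) := by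
  obtain ⟨S₀⟩ := nonempty_of_isProbabilityMeasure (Measure.pi fun _ : Fin n ↦ D)
  refine hasSubgaussianMGF_of_update_sub_le_of_bounded (M := |f S₀| + n * c) hf (fun S ↦ ?_) hc
  have h₁ := sub_le_card_mul_of_update_sub_le hc S₀ S
  have h₂ := sub_le_card_mul_of_update_sub_le hc S S₀
  rw [Fintype.card_fin] at h₁ h₂
  rw [abs_le]
  constructor <;> linarith [le_abs_self (f S₀), neg_abs_le (f S₀)]

end McDiarmid

section Rademacher

variable {Z : Type*} {m : ℕ} {G : Set (Z → ℝ)}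

lemma empRad_eq_iSup (S : Fin m → Z) :
    empRad m S G = ((2 : ℝ) ^ m)⁻¹ * ∑ ε : Fin m → Bool,
      ⨆ g : G, (1 / (m : ℝ)) * ∑ i, (if ε i then (1 : ℝ) else -1) * (g : Z → ℝ) (S i) := by
  simp only [empRad, radComp, Set.image_image, sSup_image']

lemma measurable_empRad [MeasurableSpace Z] (hGc : G.Countable) (hGm : ∀ g ∈ G, Measurable g) :
    Measurable fun S : Fin m → Z ↦ empRad m S G := by
  have := hGc.to_subtype
  simp_rw [empRad_eq_iSup]
  refine Measurable.const_mul (Finset.measurable_sum _ fun ε _ ↦ Measurable.iSup fun g ↦ ?_) _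
  have := hGm g g.2
  fun_prop

lemma ciSup_sub_ciSup_le {ι : Sort*} [Nonempty ι] {u v : ι → ℝ} {c : ℝ}
    (hv : BddAbove (Set.range v)) (h : ∀ i, u i - v i ≤ c) : (⨆ i, u i) - ⨆ i, v i ≤ c :=
  sub_le_iff_le_add.2 (ciSup_le fun i ↦ by linarith [h i, le_ciSup hv i])

lemma sign_mul_le_abs (s : Bool) (x : ℝ) : (if s then 1 else -1) * x ≤ |x| := by
  cases s <;> simp [le_abs_self, neg_le_abs]

lemma empRad_update_sub_le {a b : ℝ} (hG : G.Nonempty) (hGb : ∀ g ∈ G, ∀ z, g z ∈ Set.Icc a b)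
    (S : Fin m → Z) (i : Fin m) (z : Z) :
    empRad m (Function.update S i z) G - empRad m S G ≤ (b - a) / m := by
  have := hG.to_subtype
  simp only [empRad_eq_iSup]
  rw [← mul_sub, ← Finset.sum_sub_distrib]
  calc _ ≤ ((2 : ℝ) ^ m)⁻¹ * ∑ _ε : Fin m → Bool, (b - a) / m := by
        gcongr with ε
        refine ciSup_sub_ciSup_le ⟨(1 / m) * ∑ _j : Fin m, max |a| |b|, ?_⟩ fun g ↦ ?_
        · rintro _ ⟨g, rfl⟩
          dsimp only
          gcongr with j
          exact (sign_mul_le_abs _ _).trans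
            (abs_le_max_abs_abs (hGb g g.2 _).1 (hGb g g.2 _).2)
        · rw [← mul_sub, ← Finset.sum_sub_distrib, Finset.sum_eq_single i
            (fun j _ hj ↦ by rw [Function.update_of_ne hj, sub_self]) (by simp),
            Function.update_self, ← mul_sub, one_div_mul_eq_div]
          gcongr
          exact (sign_mul_le_abs _ _).trans (abs_sub_le_iff.2
            ⟨by linarith [(hGb g g.2 z).2, (hGb g g.2 (S i)).1],
             by linarith [(hGb g g.2 z).1, (hGb g g.2 (S i)).2]⟩)
    _ = (b - a) / m := by simp

end Rademacher

theorem stmt11 {Z : Type*} [MeasurableSpace Z] (D : Measure Z) [IsProbabilityMeasure D]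
    (m : ℕ) (hm : 1 ≤ m) (a b : ℝ) (hab : a < b) (G : Set (Z → ℝ)) (hG : G.Nonempty)
    (hGc : G.Countable) (hGm : ∀ g ∈ G, Measurable g)
    (hGb : ∀ g ∈ G, ∀ z, g z ∈ Set.Icc a b) (t : ℝ) (ht : 0 < t) :
    (Measure.pi fun _ : Fin m => D) {S | t ≤ |expRad m D G - empRad m S G|} ≤
      ENNReal.ofReal (2 * Real.exp (-2 * m * t ^ 2 / (b - a) ^ 2)) := by
  set c : ℝ≥0 := ⟨(b - a) / m, div_nonneg (sub_nonneg.2 hab.le) m.cast_nonneg⟩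
  have h := (hasSubgaussianMGF_of_update_sub_le (D := D) (c := c) (measurable_empRad hGc hGm)
    (empRad_update_sub_le hG hGb)).measure_abs_ge_le ht.le
  have hexp : -t ^ 2 / (2 * ((m * (c / 2) ^ 2 : ℝ≥0) : ℝ)) = -2 * m * t ^ 2 / (b - a) ^ 2 := by
    have : (m : ℝ) ≠ 0 := Nat.cast_ne_zero.2 (Nat.one_le_iff_ne_zero.1 hm)
    have : b - a ≠ 0 := by linarith
    push_cast
    rw [show (c : ℝ) = (b - a) / m from rfl]
    field_simp
  simp_rw [abs_sub_comm (expRad m D G), expRad]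
  rwa [hexp] at h
end

section
/- Let Z be a measurable space, D a probability measure on Z, m ≥ 1, a < b real numbers, and 𝒢 a nonempty countable class of measurable functions Z → [a, b]. For every t > 0, the probability over S = (z₁,…,z_m) drawn i.i.d. from D and ε₁,…,ε_m drawn i.i.d. uniformly from {−1, 1}, all independent, that |R_D(𝒢) − (1/m)·sup_{g ∈ 𝒢} Σ_{i=1}^m ε_i g(z_i)| ≥ t is at most 2·exp(−2mt² / ((b−a)² + 4·max{a², b²})). -/
/-!
Write `f (S, ε) = (1/m) sup_{g ∈ G} ∑ᵢ εᵢ g(zᵢ)`. Replacing one sample point `zᵢ` moves `f` by at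
most `(b - a)/m` and flipping one sign `εᵢ` moves it by at most `2 max(|a|, |b|)/m`, while by
Fubini the mean of `f` is `R_D(G)`. McDiarmid's inequality for these `2m` bounded differences
gives the tail bound with `∑ cᵢ² = ((b - a)² + 4 max(a², b²))/m`. It is proved through
sub-Gaussian moment generating functions: Hoeffding's lemma bounds the mgf of `f` in one
coordinate with the others fixed, and integrating out one coordinate at a time multiplies
these bounds.
-/

open Finset MeasureTheory

open Real ProbabilityTheory
open scoped NNReal

lemma exists_forall_mem_Icc_of_forall_sub_le {α : Type*} [Nonempty α] {X : α → ℝ} {c : ℝ}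
    (h : ∀ x y, X x - X y ≤ c) : ∃ a, ∀ x, X x ∈ Set.Icc a (a + c) := by
  obtain ⟨x₀⟩ := ‹Nonempty α›
  have hbdd : BddBelow (Set.range X) := ⟨X x₀ - c, by rintro _ ⟨x, rfl⟩; linarith [h x₀ x]⟩
  refine ⟨⨅ x, X x, fun x => ⟨ciInf_le hbdd x, ?_⟩⟩
  have : X x - c ≤ ⨅ y, X y := le_ciInf fun y => by linarith [h x y]
  linarith

lemma Fintype.sum_sub_sum_eq_of_forall_ne {ι M : Type*} [Fintype ι] [AddCommGroup M] {u v : ι → M}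
    {i : ι} (h : ∀ j, j ≠ i → u j = v j) : ∑ j, u j - ∑ j, v j = u i - v i := by
  rw [← Finset.sum_sub_distrib, Finset.sum_eq_single i (fun j _ hj => by rw [h j hj, sub_self])
    (by simp)]

lemma sq_max_abs_abs (a b : ℝ) : max |a| |b| ^ 2 = max (a ^ 2) (b ^ 2) := by
  rcases le_total |a| |b| with h | h <;> simp [h, sq_le_sq]

lemma Real.sSup_image_sub_sSup_image_le {α : Type*} {s : Set α} (hs : s.Nonempty) {u v : α → ℝ}
    (hv : BddAbove (v '' s)) {δ : ℝ} (h : ∀ x ∈ s, u x - v x ≤ δ) :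
    sSup (u '' s) - sSup (v '' s) ≤ δ := by
  rw [sub_le_iff_le_add]
  refine csSup_le (hs.image u) ?_
  rintro _ ⟨x, hx, rfl⟩
  linarith [h x hx, le_csSup hv (Set.mem_image_of_mem v hx)]

lemma Real.abs_sSup_image_le {α : Type*} {s : Set α} (hs : s.Nonempty) {u : α → ℝ} {C : ℝ}
    (h : ∀ x ∈ s, |u x| ≤ C) : |sSup (u '' s)| ≤ C := by
  have hbdd : BddAbove (u '' s) := ⟨C, by rintro _ ⟨x, hx, rfl⟩; exact (abs_le.1 (h x hx)).2⟩
  obtain ⟨x, hx⟩ := hs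
  refine abs_le.2 ⟨?_, csSup_le ⟨u x, x, hx, rfl⟩ ?_⟩
  · exact (abs_le.1 (h x hx)).1.trans (le_csSup hbdd ⟨x, hx, rfl⟩)
  · rintro _ ⟨y, hy, rfl⟩
    exact (abs_le.1 (h y hy)).2

namespace MeasureTheory

variable {Ω : Type*} [MeasurableSpace Ω] {μ : Measure Ω}

lemma integrable_of_forall_abs_le [IsFiniteMeasure μ] {f : Ω → ℝ} (hf : Measurable f) {M : ℝ}
    (h : ∀ ω, |f ω| ≤ M) : Integrable f μ :=
  .of_bound hf.aestronglyMeasurable M (ae_of_all _ fun ω => (Real.norm_eq_abs _).trans_le (h ω))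

lemma integral_sub_integral_le [IsProbabilityMeasure μ] {u v : Ω → ℝ} (hu : Integrable u μ)
    (hv : Integrable v μ) {c : ℝ} (h : ∀ ω, u ω - v ω ≤ c) : μ[u] - μ[v] ≤ c := by
  rw [← integral_sub hu hv]
  simpa using integral_mono (hu.sub hv) (integrable_const c) h

lemma abs_integral_le_of_forall_abs_le [IsProbabilityMeasure μ] {f : Ω → ℝ} {M : ℝ}
    (h : ∀ ω, |f ω| ≤ M) : |μ[f]| ≤ M := by
  simpa using norm_integral_le_of_norm_le_const (μ := μ)
    (ae_of_all _ fun ω => (Real.norm_eq_abs _).trans_le (h ω))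

lemma measureReal_pi_uniformOfFintype_singleton {ι α : Type*} [Fintype ι] [DecidableEq ι]
    [Fintype α] [Nonempty α] [MeasurableSpace α] [MeasurableSingletonClass α] (x : ι → α) :
    (Measure.pi fun _ : ι => (PMF.uniformOfFintype α).toMeasure).real {x}
      = ((Fintype.card α : ℝ) ^ Fintype.card ι)⁻¹ := by
  simp [measureReal_def, ← Set.univ_pi_singleton, Measure.pi_pi,
    PMF.toMeasure_apply_singleton _ _ (measurableSet_singleton _)]

end MeasureTheory

namespace ProbabilityTheory

variable {Ω : Type*} [MeasurableSpace Ω] {μ : Measure Ω}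

lemma HasSubgaussianMGF.measure_abs_ge_le_s12 [IsFiniteMeasure μ] {X : Ω → ℝ} {c : ℝ≥0}
    (h : HasSubgaussianMGF X c μ) {ε : ℝ} (hε : 0 ≤ ε) :
    μ.real {ω | ε ≤ |X ω|} ≤ 2 * exp (-ε ^ 2 / (2 * c)) := by
  have hsplit : {ω | ε ≤ |X ω|} = {ω | ε ≤ X ω} ∪ {ω | ε ≤ (-X) ω} := by
    ext ω; simp [le_abs, le_neg]
  calc μ.real {ω | ε ≤ |X ω|}
      ≤ μ.real {ω | ε ≤ X ω} + μ.real {ω | ε ≤ (-X) ω} := hsplit ▸ measureReal_union_le _ _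
    _ ≤ exp (-ε ^ 2 / (2 * c)) + exp (-ε ^ 2 / (2 * c)) :=
      add_le_add (h.measure_ge_le hε) (h.neg.measure_ge_le hε)
    _ = 2 * exp (-ε ^ 2 / (2 * c)) := by ring

lemma hasSubgaussianMGF_of_forall_sub_le [IsProbabilityMeasure μ] {X : Ω → ℝ}
    (hX : AEMeasurable X μ) {c : ℝ≥0} (h : ∀ ω ω', X ω - X ω' ≤ c) :
    HasSubgaussianMGF (fun ω => X ω - μ[X]) ((c / 2) ^ 2) μ := by
  have := nonempty_of_isProbabilityMeasure μ
  obtain ⟨a, ha⟩ := exists_forall_mem_Icc_of_forall_sub_le h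
  simpa using hasSubgaussianMGF_of_mem_Icc hX (ae_of_all _ ha)

lemma hasSubgaussianMGF_prod {Ω₁ Ω₂ : Type*} [MeasurableSpace Ω₁] [MeasurableSpace Ω₂]
    {μ : Measure Ω₁} {ν : Measure Ω₂} [IsProbabilityMeasure μ] [IsProbabilityMeasure ν]
    {f : Ω₁ × Ω₂ → ℝ} (hf : Measurable f) {M : ℝ} (hM : ∀ p, |f p| ≤ M) {c₁ c₂ : ℝ≥0}
    (h₁ : ∀ y, HasSubgaussianMGF (fun x => f (x, y) - ∫ x', f (x', y) ∂μ) c₁ μ)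
    (h₂ : HasSubgaussianMGF (fun y => ∫ x, f (x, y) ∂μ - ∫ p, f p ∂(μ.prod ν)) c₂ ν) :
    HasSubgaussianMGF (fun p => f p - ∫ p', f p' ∂(μ.prod ν)) (c₁ + c₂) (μ.prod ν) := by
  set E := ∫ p, f p ∂(μ.prod ν)
  set g := fun y => ∫ x, f (x, y) ∂μ
  have hint : ∀ t, Integrable (fun p => exp (t * (f p - E))) (μ.prod ν) := fun t =>
    integrable_exp_mul_of_mem_Icc (a := -M - E) (b := M - E) (hf.sub_const E).aemeasurable
      (ae_of_all _ fun p => by have := abs_le.1 (hM p); constructor <;> linarith)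
  refine ⟨hint, fun t => ?_⟩
  have hfiber : ∀ y, ∫ x, exp (t * (f (x, y) - E)) ∂μ
      = exp (t * (g y - E)) * mgf (fun x => f (x, y) - g y) μ t := fun y => by
    rw [mgf, ← integral_const_mul]
    congr 1 with x
    rw [← exp_add]
    ring_nf
  calc mgf (fun p => f p - E) (μ.prod ν) t
      = ∫ y, exp (t * (g y - E)) * mgf (fun x => f (x, y) - g y) μ t ∂ν := by
        rw [mgf, integral_prod_symm _ (hint t)]
        simp_rw [hfiber]
    _ ≤ ∫ y, exp (t * (g y - E)) * exp (c₁ * t ^ 2 / 2) ∂ν := by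
        refine integral_mono_of_nonneg (ae_of_all _ fun y => mul_nonneg (exp_nonneg _) mgf_nonneg)
          ((h₂.integrable_exp_mul t).mul_const _) (ae_of_all _ fun y => ?_)
        exact mul_le_mul_of_nonneg_left ((h₁ y).mgf_le t) (exp_nonneg _)
    _ = mgf (fun y => g y - E) ν t * exp (c₁ * t ^ 2 / 2) := by rw [mgf, integral_mul_const]
    _ ≤ exp (c₂ * t ^ 2 / 2) * exp (c₁ * t ^ 2 / 2) := by gcongr; exact h₂.mgf_le t
    _ = exp (↑(c₁ + c₂) * t ^ 2 / 2) := by rw [← exp_add]; push_cast; ring_nf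

universe u

lemma hasSubgaussianMGF_pi_of_prod_insertNth {n : ℕ} {Ω : Fin (n + 1) → Type u}
    [∀ i, MeasurableSpace (Ω i)] {μ : ∀ i, Measure (Ω i)} [∀ i, IsProbabilityMeasure (μ i)]
    {f : (∀ i, Ω i) → ℝ} {c : ℝ≥0}
    (h : HasSubgaussianMGF (fun p => f (Fin.insertNth 0 p.1 p.2) -
        ∫ p', f (Fin.insertNth 0 p'.1 p'.2) ∂(μ 0).prod (Measure.pi fun j => μ (Fin.succAbove 0 j)))
      c ((μ 0).prod (Measure.pi fun j => μ (Fin.succAbove 0 j)))) :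
    HasSubgaussianMGF (fun x => f x - ∫ x', f x' ∂Measure.pi μ) c (Measure.pi μ) := by
  let e := MeasurableEquiv.piFinSuccAbove Ω 0
  have he : MeasurePreserving e _ _ := measurePreserving_piFinSuccAbove μ 0
  have hfe : ∀ x, f (Fin.insertNth 0 (e x).1 (e x).2) = f x :=
    fun x => congrArg f (e.symm_apply_apply x)
  have hmean : ∫ p, f (Fin.insertNth 0 p.1 p.2)
      ∂(μ 0).prod (Measure.pi fun j => μ (Fin.succAbove 0 j)) = ∫ x, f x ∂Measure.pi μ := by
    simp_rw [← he.integral_comp' (fun p => f (Fin.insertNth 0 p.1 p.2)), hfe]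
  rw [hmean, ← he.map_eq] at h
  simpa only [Function.comp_def, hfe] using h.of_map he.measurable.aemeasurable

theorem hasSubgaussianMGF_pi_of_forall_sub_le {n : ℕ} {Ω : Fin n → Type u}
    [∀ i, MeasurableSpace (Ω i)] (μ : ∀ i, Measure (Ω i)) [∀ i, IsProbabilityMeasure (μ i)]
    {f : (∀ i, Ω i) → ℝ} (hf : Measurable f) {M : ℝ} (hM : ∀ x, |f x| ≤ M) {c : Fin n → ℝ≥0}
    (hc : ∀ i x x', (∀ j, j ≠ i → x j = x' j) → f x - f x' ≤ c i) :
    HasSubgaussianMGF (fun x => f x - ∫ x', f x' ∂Measure.pi μ) (∑ i, (c i / 2) ^ 2)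
      (Measure.pi μ) := by
  induction n with
  | zero =>
    have hconst : ∀ x, f x - ∫ x', f x' ∂Measure.pi μ = 0 := fun x => by
      rw [show f = fun _ => f x from funext fun y => congrArg f (Subsingleton.elim y x)]
      simp
    simp [hconst]
  | succ n ih =>
    let F := fun p : Ω 0 × (∀ j, Ω (Fin.succAbove 0 j)) => f (Fin.insertNth 0 p.1 p.2)
    have hF : Measurable F := hf.comp (MeasurableEquiv.piFinSuccAbove Ω 0).symm.measurable
    have hF_left : ∀ y, Measurable fun x => F (x, y) := fun y => hF.comp measurable_prodMk_right
    have h_fst : ∀ y, HasSubgaussianMGF (fun x => F (x, y) - ∫ x', F (x', y) ∂μ 0)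
        ((c 0 / 2) ^ 2) (μ 0) := fun y =>
      hasSubgaussianMGF_of_forall_sub_le (hF_left y).aemeasurable fun x x' =>
        hc 0 _ _ fun j hj => by
          obtain ⟨k, rfl⟩ := Fin.exists_succAbove_eq hj
          simp only [Fin.insertNth_apply_succAbove]
    have h_snd := ih (fun j => μ (Fin.succAbove 0 j)) (f := fun y => ∫ x, F (x, y) ∂μ 0)
      hF.stronglyMeasurable.integral_prod_left'.measurable
      (fun y => abs_integral_le_of_forall_abs_le fun x => hM _)
      (c := fun j => c (Fin.succAbove 0 j)) fun j y y' hyy' =>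
        integral_sub_integral_le (integrable_of_forall_abs_le (hF_left y) fun x => hM _)
          (integrable_of_forall_abs_le (hF_left y') fun x => hM _) fun x =>
            hc _ _ _ fun k hk => by
              rcases Fin.eq_self_or_eq_succAbove 0 k with rfl | ⟨l, rfl⟩
              · simp
              · simp only [Fin.insertNth_apply_succAbove, hyy' l (fun h => hk (h ▸ rfl))]
    rw [← integral_prod_symm _ (integrable_of_forall_abs_le hF fun p => hM _)] at h_snd
    rw [Fin.sum_univ_succAbove _ 0]
    exact hasSubgaussianMGF_pi_of_prod_insertNth
      (hasSubgaussianMGF_prod hF (fun p => hM _) h_fst h_snd)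

end ProbabilityTheory

section Rademacher

variable {Z : Type*} {m : ℕ}

def rademacherSum (p : (Fin m → Z) × (Fin m → Bool)) (g : Z → ℝ) : ℝ :=
  ∑ i, (if p.2 i then (1 : ℝ) else -1) * g (p.1 i)

noncomputable def rademacherSup (m : ℕ) (G : Set (Z → ℝ)) (p : (Fin m → Z) × (Fin m → Bool)) :
    ℝ :=
  (1 / (m : ℝ)) * sSup (rademacherSum p '' G)

lemma abs_rademacherSum_le {g : Z → ℝ} {K : ℝ} (hg : ∀ z, |g z| ≤ K)
    (p : (Fin m → Z) × (Fin m → Bool)) : |rademacherSum p g| ≤ m * K := by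
  calc |rademacherSum p g| ≤ ∑ i, |(if p.2 i then (1 : ℝ) else -1) * g (p.1 i)| :=
        Finset.abs_sum_le_sum_abs _ _
    _ ≤ ∑ _i : Fin m, K := Finset.sum_le_sum fun i _ => by
        rw [abs_mul]; split_ifs <;> simpa using hg (p.1 i)
    _ = m * K := by simp

lemma rademacherSum_sub_le_of_eq_off_fst {g : Z → ℝ} {a b : ℝ} (hg : ∀ z, g z ∈ Set.Icc a b)
    {i : Fin m} {S S' : Fin m → Z} (hS : ∀ j, j ≠ i → S j = S' j) (ε : Fin m → Bool) :
    rademacherSum (S, ε) g - rademacherSum (S', ε) g ≤ b - a := by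
  rw [rademacherSum, rademacherSum, Fintype.sum_sub_sum_eq_of_forall_ne fun j hj => by simp [hS j hj]]
  have := hg (S i); have := hg (S' i)
  split_ifs <;> simp only [Set.mem_Icc] at * <;> linarith

lemma rademacherSum_sub_le_of_eq_off_snd {g : Z → ℝ} {K : ℝ} (hg : ∀ z, |g z| ≤ K)
    {i : Fin m} (S : Fin m → Z) {ε ε' : Fin m → Bool} (hε : ∀ j, j ≠ i → ε j = ε' j) :
    rademacherSum (S, ε) g - rademacherSum (S, ε') g ≤ 2 * K := by
  rw [rademacherSum, rademacherSum, Fintype.sum_sub_sum_eq_of_forall_ne fun j hj => by simp [hε j hj]]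
  have := abs_le.1 (hg (S i))
  split_ifs <;> linarith

variable {G : Set (Z → ℝ)}

lemma bddAbove_rademacherSum_image {K : ℝ} (hK : ∀ g ∈ G, ∀ z, |g z| ≤ K)
    (p : (Fin m → Z) × (Fin m → Bool)) : BddAbove (rademacherSum p '' G) :=
  ⟨m * K, by rintro _ ⟨g, hg, rfl⟩; exact (abs_le.1 (abs_rademacherSum_le (hK g hg) p)).2⟩

lemma abs_rademacherSup_le (hm : m ≠ 0) (hG : G.Nonempty) {K : ℝ}
    (hK : ∀ g ∈ G, ∀ z, |g z| ≤ K) (p : (Fin m → Z) × (Fin m → Bool)) :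
    |rademacherSup m G p| ≤ K := by
  have hsup := Real.abs_sSup_image_le hG fun g hg => abs_rademacherSum_le (hK g hg) p
  rw [rademacherSup, abs_mul, abs_of_nonneg (by positivity)]
  calc 1 / (m : ℝ) * |sSup (rademacherSum p '' G)| ≤ 1 / m * (m * K) := by gcongr
    _ = K := by field_simp

lemma rademacherSup_sub_le (hG : G.Nonempty) {K : ℝ} (hK : ∀ g ∈ G, ∀ z, |g z| ≤ K)
    {p p' : (Fin m → Z) × (Fin m → Bool)} {δ : ℝ}
    (h : ∀ g ∈ G, rademacherSum p g - rademacherSum p' g ≤ δ) :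
    rademacherSup m G p - rademacherSup m G p' ≤ δ / m := by
  rw [rademacherSup, rademacherSup, ← mul_sub, one_div_mul_eq_div]
  gcongr
  exact Real.sSup_image_sub_sSup_image_le hG (bddAbove_rademacherSum_image hK p') h

lemma measurable_rademacherSup [MeasurableSpace Z] (hGc : G.Countable)
    (hGm : ∀ g ∈ G, Measurable g) : Measurable (rademacherSup m G) := by
  have : Countable G := hGc.to_subtype
  have hsum : ∀ g ∈ G, Measurable fun p : (Fin m → Z) × (Fin m → Bool) => rademacherSum p g :=
    fun g hg => Finset.measurable_sum _ fun i _ =>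
      ((Measurable.of_discrete (f := fun b : Bool => if b then (1 : ℝ) else -1)).comp
        ((measurable_pi_apply i).comp measurable_snd)).mul
        ((hGm g hg).comp ((measurable_pi_apply i).comp measurable_fst))
  unfold rademacherSup
  simp_rw [Set.image_eq_range]
  exact (Measurable.iSup fun g : G => hsum g g.2).const_mul _

lemma rademacherSup_eq_sSup (S : Fin m → Z) (ε : Fin m → Bool) :
    rademacherSup m G (S, ε) = sSup ((fun v => (1 / (m : ℝ)) *
      ∑ i, (if ε i then (1 : ℝ) else -1) * v i) '' ((fun g => fun i => g (S i)) '' G)) := by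
  rw [Set.image_image, rademacherSup, ← smul_eq_mul, ← Real.sSup_smul_of_nonneg (by positivity),
    ← Set.image_smul, Set.image_image]
  rfl

lemma integral_rademacherSup_snd (S : Fin m → Z) :
    ∫ ε, rademacherSup m G (S, ε)
      ∂(Measure.pi fun _ : Fin m => (PMF.uniformOfFintype Bool).toMeasure) = empRad m S G := by
  rw [integral_fintype .of_finite, empRad, radComp, Finset.mul_sum]
  simp [measureReal_pi_uniformOfFintype_singleton, rademacherSup_eq_sSup]

lemma integral_rademacherSup [MeasurableSpace Z] (D : Measure Z) [IsProbabilityMeasure D]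
    (hm : m ≠ 0) (hG : G.Nonempty) (hGc : G.Countable) (hGm : ∀ g ∈ G, Measurable g) {K : ℝ}
    (hK : ∀ g ∈ G, ∀ z, |g z| ≤ K) :
    ∫ p, rademacherSup m G p ∂((Measure.pi fun _ : Fin m => D).prod
      (Measure.pi fun _ : Fin m => (PMF.uniformOfFintype Bool).toMeasure)) = expRad m D G := by
  rw [integral_prod _ (integrable_of_forall_abs_le (measurable_rademacherSup hGc hGm)
    (abs_rademacherSup_le hm hG hK)), expRad]
  simp_rw [integral_rademacherSup_snd]

lemma hasSubgaussianMGF_integral_rademacherSup [MeasurableSpace Z] (D : Measure Z)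
    [IsProbabilityMeasure D] (hm : m ≠ 0) (hG : G.Nonempty) (hGc : G.Countable)
    (hGm : ∀ g ∈ G, Measurable g) {K : ℝ} (hK0 : 0 ≤ K) (hK : ∀ g ∈ G, ∀ z, |g z| ≤ K) :
    HasSubgaussianMGF (fun ε => ∫ S, rademacherSup m G (S, ε) ∂(Measure.pi fun _ : Fin m => D) -
        ∫ p, rademacherSup m G p ∂((Measure.pi fun _ : Fin m => D).prod
          (Measure.pi fun _ : Fin m => (PMF.uniformOfFintype Bool).toMeasure)))
      (∑ _i : Fin m, (NNReal.mk (2 * K / m) (by positivity) / 2) ^ 2)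
      (Measure.pi fun _ : Fin m => (PMF.uniformOfFintype Bool).toMeasure) := by
  have hf := measurable_rademacherSup (m := m) hGc hGm
  have hfb := abs_rademacherSup_le hm hG hK
  have hf_left : ∀ ε, Measurable fun S => rademacherSup m G (S, ε) :=
    fun ε => hf.comp measurable_prodMk_right
  rw [integral_prod_symm _ (integrable_of_forall_abs_le hf hfb)]
  refine hasSubgaussianMGF_pi_of_forall_sub_le _
    hf.stronglyMeasurable.integral_prod_left'.measurable
    (fun ε => abs_integral_le_of_forall_abs_le fun S => hfb _) fun i ε ε' hεε' => ?_
  refine integral_sub_integral_le (integrable_of_forall_abs_le (hf_left ε) fun S => hfb _)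
    (integrable_of_forall_abs_le (hf_left ε') fun S => hfb _) fun S => ?_
  exact rademacherSup_sub_le hG hK fun g hg => rademacherSum_sub_le_of_eq_off_snd (hK g hg) S hεε'

lemma hasSubgaussianMGF_rademacherSup [MeasurableSpace Z] (D : Measure Z)
    [IsProbabilityMeasure D] (hm : m ≠ 0) (hG : G.Nonempty) (hGc : G.Countable)
    (hGm : ∀ g ∈ G, Measurable g) {a b : ℝ} (hab : a ≤ b)
    (hGb : ∀ g ∈ G, ∀ z, g z ∈ Set.Icc a b) :
    HasSubgaussianMGF (fun p => rademacherSup m G p - expRad m D G)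
      (.mk (((b - a) ^ 2 + 4 * max (a ^ 2) (b ^ 2)) / (4 * m)) (by positivity))
      ((Measure.pi fun _ : Fin m => D).prod
        (Measure.pi fun _ : Fin m => (PMF.uniformOfFintype Bool).toMeasure)) := by
  have hK : ∀ g ∈ G, ∀ z, |g z| ≤ max |a| |b| :=
    fun g hg z => abs_le_max_abs_abs (hGb g hg z).1 (hGb g hg z).2
  have hK0 : 0 ≤ max |a| |b| := (abs_nonneg a).trans (le_max_left _ _)
  have hf := measurable_rademacherSup (m := m) hGc hGm
  have hfb := abs_rademacherSup_le hm hG hK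
  let cS := NNReal.mk ((b - a) / m) (div_nonneg (sub_nonneg.2 hab) m.cast_nonneg)
  have h_sample : ∀ ε, HasSubgaussianMGF (fun S => rademacherSup m G (S, ε) -
      ∫ S', rademacherSup m G (S', ε) ∂(Measure.pi fun _ : Fin m => D))
      (∑ _i : Fin m, (cS / 2) ^ 2) (Measure.pi fun _ : Fin m => D) := fun ε =>
    hasSubgaussianMGF_pi_of_forall_sub_le (fun _ => D) (hf.comp measurable_prodMk_right)
      (fun S => hfb _) fun i S S' hSS' => rademacherSup_sub_le hG hK fun g hg =>
        rademacherSum_sub_le_of_eq_off_fst (hGb g hg) hSS' ε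
  have h := hasSubgaussianMGF_prod hf hfb h_sample
    (hasSubgaussianMGF_integral_rademacherSup D hm hG hGc hGm hK0 hK)
  rw [integral_rademacherSup D hm hG hGc hGm hK] at h
  convert h using 2
  ext
  push_cast [cS]
  simp only [Finset.sum_const, Finset.card_univ, Fintype.card_fin, nsmul_eq_mul]
  field_simp
  rw [sq_max_abs_abs]
  ring

end Rademacher

theorem stmt12 {Z : Type*} [MeasurableSpace Z] (D : Measure Z) [IsProbabilityMeasure D]
    (m : ℕ) (hm : 1 ≤ m) (a b : ℝ) (hab : a < b) (G : Set (Z → ℝ)) (hG : G.Nonempty)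
    (hGc : G.Countable) (hGm : ∀ g ∈ G, Measurable g)
    (hGb : ∀ g ∈ G, ∀ z, g z ∈ Set.Icc a b) (t : ℝ) (ht : 0 < t) :
    ((Measure.pi fun _ : Fin m => D).prod
        (Measure.pi fun _ : Fin m => (PMF.uniformOfFintype Bool).toMeasure))
      {p : (Fin m → Z) × (Fin m → Bool) |
        t ≤ |expRad m D G -
          (1 / (m : ℝ)) *
            sSup ((fun g => ∑ i, (if p.2 i then (1 : ℝ) else -1) * g (p.1 i)) '' G)|} ≤
      ENNReal.ofReal
        (2 * Real.exp (-2 * m * t ^ 2 / ((b - a) ^ 2 + 4 * max (a ^ 2) (b ^ 2)))) := by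
  have htail := (hasSubgaussianMGF_rademacherSup D (Nat.one_le_iff_ne_zero.1 hm) hG hGc hGm
    hab.le hGb).measure_abs_ge_le_s12 ht.le
  rw [← ofReal_measureReal]
  refine ENNReal.ofReal_le_ofReal ?_
  convert htail using 3
  · ext p
    rw [abs_sub_comm]
    rfl
  · simp only [NNReal.coe_mk]
    field_simp
    norm_num
end
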